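/- Let X ⊆ R^n_{≥0} be nonempty and finite, c_1,...,c_K ∈ R^n_{≥0} with K even, and define opt(c) = min_{y∈X} cᵗy. Partition [K] into pairs S_j = {j_1, j_2} and set c̄_j = (c_{j_1}+c_{j_2})/2 and d_j = (opt(c_{j_1}) + opt(c_{j_2}))/2. If x̄ minimizes the generalized regret objective max_{j∈[K/2]} (c̄_jᵗ x − d_j) over X, then max_{i∈[K]} (c_iᵗ x̄ − opt(c_i)) ≤ 2 · min_{x∈X} max_{i∈[K]} (c_iᵗ x − opt(c_i)). -/
import Mathlib


/-- Solving the pairwise-aggregated *generalized* min-max regret problem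
(with constants `d j` equal to the average of the `opt`-values of the pair)
yields a 2-approximation for the original min-max regret problem. -/
theorem stmt5 {n m : ℕ} (hm : 0 < m)
    (X : Finset (Fin n → ℝ)) (hX : X.Nonempty)
    (hXnn : ∀ x ∈ X, ∀ t, 0 ≤ x t)
    (c : Fin (2 * m) → Fin n → ℝ) (hc : ∀ i t, 0 ≤ c i t)
    (opt : Fin (2 * m) → ℝ)
    (hopt : ∀ i, opt i = X.inf' hX fun y => ∑ t, c i t * y t)
    (π : Fin m × Fin 2 ≃ Fin (2 * m))
    (cbar : Fin m → Fin n → ℝ)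
    (hcbar : ∀ j, cbar j = fun t => (c (π (j, 0)) t + c (π (j, 1)) t) / 2)
    (d : Fin m → ℝ)
    (hd : ∀ j, d j = (opt (π (j, 0)) + opt (π (j, 1))) / 2)
    (xbar : Fin n → ℝ) (hxbar : xbar ∈ X)
    (hmin : ∀ x ∈ X,
      (Finset.univ.sup' ⟨⟨0, hm⟩, Finset.mem_univ _⟩ fun j =>
        (∑ t, cbar j t * xbar t) - d j) ≤
      Finset.univ.sup' ⟨⟨0, hm⟩, Finset.mem_univ _⟩ fun j =>
        (∑ t, cbar j t * x t) - d j) :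
    (Finset.univ.sup' ⟨⟨0, by omega⟩, Finset.mem_univ _⟩ fun i =>
        (∑ t, c i t * xbar t) - opt i) ≤
      2 * X.inf' hX fun x =>
        Finset.univ.sup' ⟨⟨0, by omega⟩, Finset.mem_univ _⟩ fun i =>
          (∑ t, c i t * x t) - opt i := by
  -- regret is nonnegative on X
  have hreg : ∀ i, ∀ x ∈ X, 0 ≤ (∑ t, c i t * x t) - opt i := by
    intro i x hx
    have h := Finset.inf'_le (fun y => ∑ t, c i t * y t) hx
    rw [hopt i]; linarith
  -- aggregated sum expansion
  have hcb : ∀ (j : Fin m) (x : Fin n → ℝ), (∑ t, cbar j t * x t)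
      = ((∑ t, c (π (j, 0)) t * x t) + ∑ t, c (π (j, 1)) t * x t) / 2 := by
    intro j x
    have h : ∀ t, cbar j t * x t
        = (c (π (j, 0)) t * x t + c (π (j, 1)) t * x t) / 2 := by
      intro t; rw [hcbar]; ring
    simp_rw [h]
    rw [← Finset.sum_div, Finset.sum_add_distrib]
  -- aggregated regret equals average of regrets
  have hagg : ∀ (j : Fin m) (x : Fin n → ℝ), (∑ t, cbar j t * x t) - d j
      = (((∑ t, c (π (j, 0)) t * x t) - opt (π (j, 0)))
        + ((∑ t, c (π (j, 1)) t * x t) - opt (π (j, 1)))) / 2 := by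
    intro j x
    rw [hcb, hd]; ring
  obtain ⟨xs, hxs, hxsval⟩ := Finset.exists_mem_eq_inf' hX
    (fun x => Finset.univ.sup' ⟨⟨0, by omega⟩, Finset.mem_univ _⟩
      fun i => (∑ t, c i t * x t) - opt i)
  rw [hxsval]
  apply Finset.sup'_le
  intro i _
  obtain ⟨⟨j, s⟩, rfl⟩ := π.surjective i
  -- step A: individual regret ≤ 2 * aggregated regret at xbar
  have hA : (∑ t, c (π (j, s)) t * xbar t) - opt (π (j, s))
      ≤ 2 * ((∑ t, cbar j t * xbar t) - d j) := by
    have h0 := hreg (π (j, 0)) xbar hxbar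
    have h1 := hreg (π (j, 1)) xbar hxbar
    rw [hagg]
    fin_cases s <;> simp <;> linarith
  -- step B+C: ≤ 2 * aggregated objective at xs
  have hB : (∑ t, cbar j t * xbar t) - d j
      ≤ Finset.univ.sup' ⟨⟨0, hm⟩, Finset.mem_univ _⟩
        fun j => (∑ t, cbar j t * xs t) - d j :=
    le_trans (Finset.le_sup' (fun j => (∑ t, cbar j t * xbar t) - d j) (Finset.mem_univ j)) (hmin xs hxs)
  -- step D: aggregated objective at xs ≤ max regret at xs
  have hD : (Finset.univ.sup' ⟨⟨0, hm⟩, Finset.mem_univ _⟩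
        fun j => (∑ t, cbar j t * xs t) - d j)
      ≤ Finset.univ.sup' ⟨⟨0, by omega⟩, Finset.mem_univ _⟩
        fun i => (∑ t, c i t * xs t) - opt i := by
    apply Finset.sup'_le
    intro k _
    rw [hagg]
    have h0 := Finset.le_sup' (fun i => (∑ t, c i t * xs t) - opt i)
      (Finset.mem_univ (π (k, 0)))
    have h1 := Finset.le_sup' (fun i => (∑ t, c i t * xs t) - opt i)
      (Finset.mem_univ (π (k, 1)))
    linarith
  linarith
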